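/- arXiv:2009.06339 — 6 statements merged into one kernel-verified Lean document; each statement's English description precedes it below -/
import Mathlib

section
/- Fix t_i > 0 and real constants U, W. Define a(t) = (t/t_i)^(2/3), H(t) = a'(t)/a(t), ρ_b(t) = 1/(6π t²), and P(t) = (3/5)[(U t_i + (3/2) W t_i²)(t/t_i)^(2/3) − (U t_i − W t_i²)(t/t_i)^(−1) − (5/2) W t_i²]. Then for all t > 0: P'' + 2H P' − 4π ρ_b P = a(t)^(−3) W, and moreover P(t_i) = 0, P'(t_i) = U, and P''(t_i) = W − 2H(t_i) U. -/
/-!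
On an Einstein–de Sitter background `H = 2/(3t)` and `4πρ_b = 2/(3t²)`, so the homogeneous
equation `P'' + 2HP' - 4πρ_b P = 0` is of Euler type: the power `(t/t_i)^p` solves it exactly
when `p² + p/3 = 2/3`, i.e. for the growing mode `p = 2/3` and the decaying mode `p = -1`.
Since `a⁻³ = (t_i/t)²`, the constant `-(3/2) W t_i²` is a particular solution, and the
coefficients of the two modes are fixed by `P(t_i) = 0` and `P'(t_i) = U`.
-/

open Real

noncomputable def powerModes (τ A p B q C : ℝ) (s : ℝ) : ℝ :=
  A * (s / τ) ^ p + B * (s / τ) ^ q + C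

section PowerModes

variable {τ t : ℝ}

theorem hasDerivAt_div_rpow (c : ℝ) (h : t / τ ≠ 0) :
    HasDerivAt (fun s => (s / τ) ^ c) (c / τ * (t / τ) ^ (c - 1)) t := by
  have := (hasDerivAt_rpow_const (p := c) (Or.inl h)).comp t ((hasDerivAt_id t).div_const τ)
  exact this.congr_deriv (by ring)

theorem logDeriv_div_rpow (c : ℝ) (h : 0 < t / τ) :
    logDeriv (fun s => (s / τ) ^ c) t = c / t := by
  have hτ : τ ≠ 0 := by rintro rfl; simp at h
  have ht : t ≠ 0 := by rintro rfl; simp at h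
  rw [logDeriv_apply, (hasDerivAt_div_rpow c h.ne').deriv, rpow_sub_one h.ne']
  field_simp [(rpow_pos_of_pos h c).ne']

variable {A p B q C : ℝ}

theorem hasDerivAt_powerModes (h : t / τ ≠ 0) :
    HasDerivAt (powerModes τ A p B q C)
      (powerModes τ (A * p / τ) (p - 1) (B * q / τ) (q - 1) 0 t) t :=
  ((((hasDerivAt_div_rpow p h).const_mul A).add
    ((hasDerivAt_div_rpow q h).const_mul B)).add_const C).congr_deriv
      (by simp only [powerModes]; ring)

theorem deriv_powerModes (hτ : τ ≠ 0) (ht : t ≠ 0) :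
    deriv (powerModes τ A p B q C) t
      = powerModes τ (A * p / τ) (p - 1) (B * q / τ) (q - 1) 0 t :=
  (hasDerivAt_powerModes (div_ne_zero ht hτ)).deriv

theorem deriv_deriv_powerModes (hτ : τ ≠ 0) (ht : t ≠ 0) :
    deriv (deriv (powerModes τ A p B q C)) t
      = powerModes τ (A * p / τ * (p - 1) / τ) (p - 1 - 1)
          (B * q / τ * (q - 1) / τ) (q - 1 - 1) 0 t := by
  have hderiv : deriv (powerModes τ A p B q C)
      =ᶠ[nhds t] powerModes τ (A * p / τ) (p - 1) (B * q / τ) (q - 1) 0 :=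
    Filter.eventually_of_mem (isOpen_ne.mem_nhds ht) fun s hs => deriv_powerModes hτ hs
  rw [hderiv.deriv_eq, deriv_powerModes hτ ht]

theorem powerModes_eds (hτ : τ ≠ 0) (ht : t ≠ 0)
    (hp : p ^ 2 + p / 3 = 2 / 3) (hq : q ^ 2 + q / 3 = 2 / 3) :
    deriv (deriv (powerModes τ A p B q C)) t + 4 / (3 * t) * deriv (powerModes τ A p B q C) t
        - 2 / (3 * t ^ 2) * powerModes τ A p B q C t
      = -(2 / (3 * t ^ 2)) * C := by
  have hx : t / τ ≠ 0 := div_ne_zero ht hτ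
  rw [deriv_deriv_powerModes hτ ht, deriv_powerModes hτ ht]
  simp only [powerModes, rpow_sub_one hx]
  field_simp
  linear_combination (3 * A * (t / τ) ^ p) * hp + (3 * B * (t / τ) ^ q) * hq

end PowerModes

/-- The explicit RZA trace solution on an Einstein–de Sitter background:
`P'' + 2H P' - 4π ρ_b P = a⁻³ W` with `P(t_i) = 0`, `P'(t_i) = U` and
`P''(t_i) = W - 2H(t_i) U`. -/
theorem rza_trace_solution_eds (t_i U W : ℝ) (hti : 0 < t_i)
    (a H ρb P : ℝ → ℝ)
    (ha : ∀ t, a t = (t / t_i) ^ ((2 : ℝ) / 3))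
    (hH : ∀ t, H t = deriv a t / a t)
    (hρ : ∀ t, ρb t = 1 / (6 * π * t ^ 2))
    (hP : ∀ t, P t = (3 / 5) * ((U * t_i + (3 / 2) * W * t_i ^ 2) * (t / t_i) ^ ((2 : ℝ) / 3)
      - (U * t_i - W * t_i ^ 2) * (t / t_i) ^ (-1 : ℝ)
      - (5 / 2) * W * t_i ^ 2)) :
    (∀ t > 0, deriv (deriv P) t + 2 * H t * deriv P t - 4 * π * ρb t * P t
        = (a t) ^ (-3 : ℝ) * W) ∧
    P t_i = 0 ∧ deriv P t_i = U ∧ deriv (deriv P) t_i = W - 2 * H t_i * U := by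
  have hP_modes : P = powerModes t_i (3 / 5 * (U * t_i + 3 / 2 * W * t_i ^ 2)) (2 / 3)
      (-(3 / 5) * (U * t_i - W * t_i ^ 2)) (-1) (-(3 / 2) * W * t_i ^ 2) := by
    funext t; rw [hP, powerModes]; ring
  have hH_eds : ∀ t > 0, H t = 2 / (3 * t) := fun t ht => by
    rw [hH, ← logDeriv_apply, funext ha, logDeriv_div_rpow _ (div_pos ht hti)]; ring
  have hρ_eds : ∀ t, 4 * π * ρb t = 2 / (3 * t ^ 2) := fun t => by
    rw [hρ]; field_simp; ring
  have ha_inv_cube : ∀ t > 0, a t ^ (-3 : ℝ) = (t_i / t) ^ 2 := fun t ht => by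
    rw [ha, ← rpow_mul (div_pos ht hti).le, show (2 : ℝ) / 3 * -3 = (-2 : ℤ) by norm_num,
      rpow_intCast, zpow_neg, ← inv_zpow, inv_div, zpow_two, sq]
  have hti' := hti.ne'
  refine ⟨fun t ht => ?_, ?_, ?_, ?_⟩
  · have hL : deriv (deriv P) t + 4 / (3 * t) * deriv P t - 2 / (3 * t ^ 2) * P t
        = -(2 / (3 * t ^ 2)) * (-(3 / 2) * W * t_i ^ 2) :=
      hP_modes ▸ powerModes_eds hti' ht.ne' (by norm_num) (by norm_num)
    rw [hH_eds t ht, hρ_eds, ha_inv_cube t ht]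
    linear_combination hL
  · simp only [hP_modes, powerModes, div_self hti', one_rpow]; ring
  · simp only [hP_modes, deriv_powerModes hti' hti', powerModes, div_self hti', one_rpow]
    field_simp; ring
  · simp only [hP_modes, deriv_deriv_powerModes hti' hti', hH_eds t_i hti, powerModes,
      div_self hti', one_rpow]
    field_simp; ring
end

section
/- Let S : I → ℝ be twice differentiable on an open interval I with S > 0 and S' ≠ 0 on I, satisfying (S')² = −k₀ + 2μ/S + (Λ/3)S². Then f₋ := S'/S satisfies the linear ODE f'' + 2 (S'/S) f' − (3μ/S³) f = 0 on I. -/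
/-! Differentiating the Friedmann equation and cancelling `S'` gives the acceleration equation
`S'' = -μ/S² + (Λ/3) S`, so `f = S'/S` obeys the Riccati equation `f' = Λ/3 - μ/S³ - f²`.
Differentiating once more, `f'' = 3μ S'/S⁴ - 2 f f'`, and `3μ S'/S⁴ = (3μ/S³) f`. -/

open Filter Topology

section

variable {S S' f f' : ℝ → ℝ} {t : ℝ}

theorem HasDerivAt.eq_of_eventuallyEq {g : ℝ → ℝ} {a b : ℝ} (hf : HasDerivAt f a t)
    (hg : HasDerivAt g b t) (hfg : f =ᶠ[𝓝 t] g) : a = b :=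
  hf.unique (hg.congr_of_eventuallyEq hfg)

theorem acceleration_eq_of_friedmann {k₀ μ Λ s'' : ℝ} (hSt : S t ≠ 0) (hS't : S' t ≠ 0)
    (hS : HasDerivAt S (S' t) t) (hS' : HasDerivAt S' s'' t)
    (hfried : (fun u ↦ S' u ^ 2) =ᶠ[𝓝 t] fun u ↦ -k₀ + 2 * μ / S u + Λ / 3 * S u ^ 2) :
    s'' = -μ / S t ^ 2 + Λ / 3 * S t := by
  have hlhs : HasDerivAt (fun u ↦ S' u ^ 2) (2 * S' t * s'') t := by
    simpa [mul_assoc] using hS'.fun_pow 2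
  have hrhs : HasDerivAt (fun u ↦ -k₀ + 2 * μ / S u + Λ / 3 * S u ^ 2)
      (-(2 * μ * S' t) / S t ^ 2 + Λ / 3 * (2 * S t * S' t)) t := by
    have hinv := (hasDerivAt_const t (2 * μ)).fun_div hS hSt
    have hsq := (hS.fun_pow 2).const_mul (Λ / 3)
    exact (((hasDerivAt_const t (-k₀)).fun_add hinv).fun_add hsq).congr_deriv (by ring)
  have key := hlhs.eq_of_eventuallyEq hrhs hfried
  field_simp at key ⊢
  linear_combination key

theorem hasDerivAt_div_riccati {s'' : ℝ} (hSt : S t ≠ 0) (hS : HasDerivAt S (S' t) t)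
    (hS' : HasDerivAt S' s'' t) :
    HasDerivAt (fun u ↦ S' u / S u) (s'' / S t - (S' t / S t) ^ 2) t :=
  (hS'.fun_div hS hSt).congr_deriv (by field_simp)

theorem perturbation_ode_of_riccati {μ Λ f'' : ℝ} (hSt : S t ≠ 0)
    (hS : HasDerivAt S (S' t) t) (hf'' : HasDerivAt f' f'' t) (hft : f t = S' t / S t)
    (hf' : HasDerivAt f (f' t) t)
    (hriccati : f' =ᶠ[𝓝 t] fun u ↦ -μ / S u ^ 3 + Λ / 3 - f u ^ 2) :
    f'' + 2 * (S' t / S t) * f' t - 3 * μ / S t ^ 3 * f t = 0 := by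
  have hrhs : HasDerivAt (fun u ↦ -μ / S u ^ 3 + Λ / 3 - f u ^ 2)
      (μ * (3 * S t ^ 2 * S' t) / (S t ^ 3) ^ 2 - 2 * f t * f' t) t := by
    have hcube := (hasDerivAt_const t (-μ)).fun_div (hS.fun_pow 3) (pow_ne_zero 3 hSt)
    exact ((hcube.add_const (Λ / 3)).fun_sub (hf'.fun_pow 2)).congr_deriv (by ring)
  rw [hf''.eq_of_eventuallyEq hrhs hriccati, hft]
  field_simp
  ring

end

/-- If `S` solves the Friedmann-like equation `(S')² = -k₀ + 2μ/S + (Λ/3)S²`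
on an open interval with `S > 0` and `S' ≠ 0`, then `f₋ = S'/S` solves
`f'' + 2(S'/S) f' - (3μ/S³) f = 0`. -/
theorem decaying_mode_solves_perturbation_ode (I : Set ℝ) (hI : IsOpen I)
    (k₀ μ Λ : ℝ) (S S' S'' f f' f'' : ℝ → ℝ)
    (hSpos : ∀ t ∈ I, 0 < S t)
    (hS'ne : ∀ t ∈ I, S' t ≠ 0)
    (hS : ∀ t ∈ I, HasDerivAt S (S' t) t)
    (hS' : ∀ t ∈ I, HasDerivAt S' (S'' t) t)
    (hfried : ∀ t ∈ I, (S' t) ^ 2 = -k₀ + 2 * μ / S t + (Λ / 3) * (S t) ^ 2)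
    (hf : ∀ t ∈ I, f t = S' t / S t)
    (hf' : ∀ t ∈ I, HasDerivAt f (f' t) t)
    (hf'' : ∀ t ∈ I, HasDerivAt f' (f'' t) t) :
    ∀ t ∈ I, f'' t + 2 * (S' t / S t) * f' t - (3 * μ / (S t) ^ 3) * f t = 0 := by
  have near {P : ℝ → Prop} (hP : ∀ u ∈ I, P u) {t : ℝ} (ht : t ∈ I) : ∀ᶠ u in 𝓝 t, P u :=
    eventually_of_mem (hI.mem_nhds ht) hP
  have hriccati : ∀ t ∈ I, f' t = -μ / S t ^ 3 + Λ / 3 - f t ^ 2 := by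
    intro t ht
    have hSt := (hSpos t ht).ne'
    have hacc := acceleration_eq_of_friedmann hSt (hS'ne t ht) (hS t ht) (hS' t ht) (near hfried ht)
    rw [(hf' t ht).eq_of_eventuallyEq (hasDerivAt_div_riccati hSt (hS t ht) (hS' t ht))
      (near hf ht), hacc, hf t ht]
    field_simp
  intro t ht
  exact perturbation_ode_of_riccati (hSpos t ht).ne' (hS t ht) (hf'' t ht) (hf t ht) (hf' t ht)
    (near hriccati ht)
end

section
/- Let D be a measure space with finite positive measure weighted average ⟨·⟩ (i.e., ⟨f⟩ = (∫ f J dμ)/(∫ J dμ) for a fixed positive weight J), and let H₀ ∈ ℝ be a constant. Suppose Θ = 3H₀ + θ for a function θ on D, and σ² = (1/3) θ². Then Q := (2/3)(⟨Θ²⟩ − ⟨Θ⟩²) − 2⟨σ²⟩ = −(2/3) ⟨θ⟩². In particular Q ≤ 0, and Q = 0 if and only if ⟨θ⟩ = 0. -/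
open MeasureTheory

/-!
Writing `Θ = 3H₀ + θ`, the weighted variance of `Θ` equals that of `θ`, since a weighted variance
is invariant under adding a constant. The term `-2⟨σ²⟩ = -(2/3)⟨θ²⟩` then cancels the `⟨θ²⟩` part
of `(2/3)(⟨θ²⟩ - ⟨θ⟩²)`, leaving `-(2/3)⟨θ⟩²`.
-/

namespace MeasureTheory

variable {α : Type*} [MeasurableSpace α] {μ : Measure α} {J : α → ℝ}

noncomputable def weightedAverage (μ : Measure α) (J f : α → ℝ) : ℝ :=
  (∫ x, f x * J x ∂μ) / ∫ x, J x ∂μ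

theorem weightedAverage_const_mul (c : ℝ) (f : α → ℝ) :
    weightedAverage μ J (fun x => c * f x) = c * weightedAverage μ J f := by
  simp only [weightedAverage, mul_assoc, integral_const_mul, mul_div_assoc]

theorem weightedAverage_add {f g : α → ℝ} (hf : Integrable (fun x => f x * J x) μ)
    (hg : Integrable (fun x => g x * J x) μ) :
    weightedAverage μ J (fun x => f x + g x) = weightedAverage μ J f + weightedAverage μ J g := by
  simp only [weightedAverage, add_mul, integral_add hf hg, add_div]

theorem weightedAverage_const (hJ : ∫ x, J x ∂μ ≠ 0) (c : ℝ) :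
    weightedAverage μ J (fun _ => c) = c := by
  simp only [weightedAverage, integral_const_mul, mul_div_assoc, div_self hJ, mul_one]

theorem weightedAverage_const_add (hJ : Integrable J μ) (hJ₀ : ∫ x, J x ∂μ ≠ 0) {f : α → ℝ}
    (hf : Integrable (fun x => f x * J x) μ) (c : ℝ) :
    weightedAverage μ J (fun x => c + f x) = c + weightedAverage μ J f := by
  rw [weightedAverage_add (hJ.const_mul c) hf, weightedAverage_const hJ₀]

theorem weightedAverage_variance_const_add (hJ : Integrable J μ) (hJ₀ : ∫ x, J x ∂μ ≠ 0)
    {f : α → ℝ} (hf : Integrable (fun x => f x * J x) μ)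
    (hf2 : Integrable (fun x => f x ^ 2 * J x) μ) (c : ℝ) :
    weightedAverage μ J (fun x => (c + f x) ^ 2) - weightedAverage μ J (fun x => c + f x) ^ 2 =
      weightedAverage μ J (fun x => f x ^ 2) - weightedAverage μ J f ^ 2 := by
  have hlin : Integrable (fun x => (2 * c * f x + f x ^ 2) * J x) μ := by
    simpa only [add_mul, mul_assoc, Pi.add_def] using (hf.const_mul (2 * c)).add hf2
  have hsq : weightedAverage μ J (fun x => (c + f x) ^ 2)
      = c ^ 2 + (2 * c * weightedAverage μ J f + weightedAverage μ J (fun x => f x ^ 2)) := by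
    have hexp : (fun x => (c + f x) ^ 2) = fun x => c ^ 2 + (2 * c * f x + f x ^ 2) := by
      funext x; ring
    rw [hexp, weightedAverage_const_add hJ hJ₀ hlin,
      weightedAverage_add (by simpa only [mul_assoc] using hf.const_mul (2 * c)) hf2,
      weightedAverage_const_mul]
  rw [hsq, weightedAverage_const_add hJ hJ₀ hf]
  ring

end MeasureTheory

theorem classII_backreaction_nonpositive_general
    (α : Type) [MeasureSpace α]
    (J θ Θ σsq : α → ℝ) (H₀ : ℝ)
    (hΘ : ∀ x, Θ x = 3 * H₀ + θ x)
    (hσ : ∀ x, σsq x = (1 / 3) * (θ x) ^ 2)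
    (hJint : Integrable J)
    (hθJ : Integrable (fun x => θ x * J x))
    (hθ2J : Integrable (fun x => (θ x) ^ 2 * J x))
    (hJne : (∫ x, J x) ≠ 0)
    (avg : (α → ℝ) → ℝ)
    (havg : ∀ f, avg f = (∫ x, f x * J x) / (∫ x, J x))
    (Q : ℝ)
    (hQ : Q = (2 / 3) * (avg (fun x => (Θ x) ^ 2) - (avg Θ) ^ 2) - 2 * avg σsq) :
    Q = -(2 / 3) * (avg θ) ^ 2 ∧ Q ≤ 0 ∧ (Q = 0 ↔ avg θ = 0) := by
  obtain rfl : avg = weightedAverage volume J := funext havg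
  obtain rfl : Θ = fun x => 3 * H₀ + θ x := funext hΘ
  obtain rfl : σsq = fun x => (1 / 3) * θ x ^ 2 := funext hσ
  have hQθ : Q = -(2 / 3) * weightedAverage volume J θ ^ 2 := by
    rw [hQ, weightedAverage_variance_const_add hJint hJne hθJ hθ2J, weightedAverage_const_mul]
    ring
  refine ⟨hQθ, ?_, by simp [hQθ]⟩
  rw [hQθ]
  exact mul_nonpos_of_nonpos_of_nonneg (by norm_num) (sq_nonneg _)

/-- For the weighted average `⟨f⟩ = (∫ f J dμ)/(∫ J dμ)` on a finite measure
space, if `Θ = 3H₀ + θ` and `σ² = (1/3)θ²`, then the kinematical backreaction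
`Q = (2/3)(⟨Θ²⟩ - ⟨Θ⟩²) - 2⟨σ²⟩` equals `-(2/3)⟨θ⟩²`; in particular `Q ≤ 0`
and `Q = 0 ↔ ⟨θ⟩ = 0`. -/
theorem classII_backreaction_nonpositive
    (α : Type) [MeasureSpace α] [IsFiniteMeasure (volume : Measure α)]
    (hpos : 0 < (volume : Measure α) Set.univ)
    (J θ Θ σsq : α → ℝ) (H₀ : ℝ)
    (hJpos : ∀ x, 0 < J x)
    (hΘ : ∀ x, Θ x = 3 * H₀ + θ x)
    (hσ : ∀ x, σsq x = (1 / 3) * (θ x) ^ 2)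
    (hJint : Integrable J)
    (hθJ : Integrable (fun x => θ x * J x))
    (hθ2J : Integrable (fun x => (θ x) ^ 2 * J x))
    (hJne : (∫ x, J x) ≠ 0)
    (avg : (α → ℝ) → ℝ)
    (havg : ∀ f, avg f = (∫ x, f x * J x) / (∫ x, J x))
    (Q : ℝ)
    (hQ : Q = (2 / 3) * (avg (fun x => (Θ x) ^ 2) - (avg Θ) ^ 2) - 2 * avg σsq) :
    Q = -(2 / 3) * (avg θ) ^ 2 ∧ Q ≤ 0 ∧ (Q = 0 ↔ avg θ = 0) :=
  classII_backreaction_nonpositive_general α J θ Θ σsq H₀ hΘ hσ hJint hθJ hθ2J hJne avg havg Q hQ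
end

section
/- Let a : I → ℝ be positive and differentiable, μ ∈ ℝ, and let F, Ã, G : I → ℝ with G = Ã·(1 + P) for P = −(F − F_i)/Ã, where Ã ≠ 0 is constant in time and F is twice differentiable with F̈ + 2(ȧ/a)Ḟ = (3μ/a³) F and G ≠ 0. Then (1/(3(1+P))) · (2(ȧ/a) Ṗ + P̈) = −(μ/a³) · (F/G). -/
/-! As `Ṗ = -Ḟ/Ã` and `P̈ = -F̈/Ã`, the combination `2(ȧ/a)Ṗ + P̈` is `-1/Ã` times the left side
of the growth equation, i.e. `-(3μ/a³) F / Ã`; dividing by `3(1 + P)` and using `Ã(1 + P) = G`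
gives `-(μ/a³) F / G`. -/

lemma damped_combination_eq_of_growth_eq {r k A f f' f'' : ℝ}
    (hode : f'' + 2 * r * f' = 3 * k * f) :
    2 * r * (-f' / A) + -f'' / A = -(3 * k * f) / A := by
  rw [← hode]
  ring

lemma weyl_functional_eq_of_growth_eq {r k A P f f' f'' : ℝ}
    (hode : f'' + 2 * r * f' = 3 * k * f) (hG : A * (1 + P) ≠ 0) :
    1 / (3 * (1 + P)) * (2 * r * (-f' / A) + -f'' / A) = -k * (f / (A * (1 + P))) := by
  have hA : A ≠ 0 := left_ne_zero_of_mul hG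
  have hP : 1 + P ≠ 0 := right_ne_zero_of_mul hG
  rw [damped_combination_eq_of_growth_eq hode]
  field_simp

theorem psi2_functional_classII_general (I : Set ℝ)
    (μ Atil : ℝ)
    (a a' F F' F'' : ℝ → ℝ)
    (P Pd Pdd G : ℝ → ℝ)
    (hode : ∀ t ∈ I, F'' t + 2 * (a' t / a t) * F' t = (3 * μ / (a t) ^ 3) * F t)
    (hPd : ∀ t, Pd t = -(F' t) / Atil)
    (hPdd : ∀ t, Pdd t = -(F'' t) / Atil)
    (hG : ∀ t, G t = Atil * (1 + P t))
    (hGne : ∀ t ∈ I, G t ≠ 0) :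
    ∀ t ∈ I, (1 / (3 * (1 + P t))) * (2 * (a' t / a t) * Pd t + Pdd t)
      = -(μ / (a t) ^ 3) * (F t / G t) := by
  intro t ht
  have hode_t : F'' t + 2 * (a' t / a t) * F' t = 3 * (μ / a t ^ 3) * F t := by
    rw [hode t ht]
    ring
  rw [hPd, hPdd, hG]
  exact weyl_functional_eq_of_growth_eq hode_t (hG t ▸ hGne t ht)

/-- The RZA functional for the gravitoelectric Weyl scalar reproduces the
Szekeres class II expression: with `P = -(F - F_i)/Ã`, `G = Ã(1 + P)`, and
`F` solving `F̈ + 2(ȧ/a)Ḟ = (3μ/a³)F`, one has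
`(1/(3(1+P)))(2(ȧ/a)Ṗ + P̈) = -(μ/a³)(F/G)`. -/
theorem psi2_functional_classII (I : Set ℝ) (hI : IsOpen I)
    (μ Atil Fi : ℝ) (hAtil : Atil ≠ 0)
    (a a' F F' F'' : ℝ → ℝ)
    (P Pd Pdd G : ℝ → ℝ)
    (hapos : ∀ t ∈ I, 0 < a t)
    (ha : ∀ t ∈ I, HasDerivAt a (a' t) t)
    (hF : ∀ t ∈ I, HasDerivAt F (F' t) t)
    (hF' : ∀ t ∈ I, HasDerivAt F' (F'' t) t)
    (hode : ∀ t ∈ I, F'' t + 2 * (a' t / a t) * F' t = (3 * μ / (a t) ^ 3) * F t)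
    (hP : ∀ t, P t = -(F t - Fi) / Atil)
    (hPd : ∀ t, Pd t = -(F' t) / Atil)
    (hPdd : ∀ t, Pdd t = -(F'' t) / Atil)
    (hG : ∀ t, G t = Atil * (1 + P t))
    (hGne : ∀ t ∈ I, G t ≠ 0) :
    ∀ t ∈ I, (1 / (3 * (1 + P t))) * (2 * (a' t / a t) * Pd t + Pdd t)
      = -(μ / (a t) ^ 3) * (F t / G t) :=
  psi2_functional_classII_general I μ Atil a a' F F' F'' P Pd Pdd G hode hPd hPdd hG hGne
end

section
/- Let δ : I → ℝ be twice differentiable with 1 + δ > 0 on I, and let H, ρ_b : I → ℝ. Suppose δ satisfies δ̈ + 2H δ̇ − 4π ρ_b δ − (2/(1+δ)) δ̇² − 4π ρ_b δ² = 0 on I. Then Δ := δ/(1+δ) satisfies the linear equation Δ̈ + 2H Δ̇ − 4π ρ_b Δ = 0 on I. -/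
/-!
Writing `x = 1 + δ`, one has `Δ̇ = δ̇ / x²` and `Δ̈ = δ̈ / x² - 2 δ̇² / x³`, so
`Δ̈ + 2H Δ̇ - 4πρ_b Δ` is exactly the left-hand side of the nonlinear equation for `δ` divided by
`x²`: the quadratic terms `-2 δ̇² / x` and `-4πρ_b δ²` are what the change of variables absorbs.
-/

open Real

section Derivatives

variable {𝕜 : Type*} [NontriviallyNormedField 𝕜] {f g : 𝕜 → 𝕜} {f' g' t : 𝕜}

theorem HasDerivAt.div_one_add_self (hf : HasDerivAt f f' t) (hne : 1 + f t ≠ 0) :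
    HasDerivAt (fun s => f s / (1 + f s)) (f' / (1 + f t) ^ 2) t := by
  refine (hf.div (hf.const_add 1) hne).congr_deriv ?_
  field_simp
  ring

theorem HasDerivAt.div_one_add_sq (hf : HasDerivAt f f' t) (hg : HasDerivAt g g' t)
    (hne : 1 + f t ≠ 0) :
    HasDerivAt (fun s => g s / (1 + f s) ^ 2)
      (g' / (1 + f t) ^ 2 - 2 * f' * g t / (1 + f t) ^ 3) t := by
  refine (hg.div ((hf.const_add 1).pow 2) (pow_ne_zero 2 hne)).congr_deriv ?_
  simp only [Pi.pow_apply]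
  field_simp
  ring

end Derivatives

theorem linear_residual_eq_div_sq {K : Type*} [Field K] (H k δ δ' δ'' : K) (hne : 1 + δ ≠ 0) :
    (δ'' / (1 + δ) ^ 2 - 2 * δ' * δ' / (1 + δ) ^ 3) + 2 * H * (δ' / (1 + δ) ^ 2)
      - k * (δ / (1 + δ)) =
    (δ'' + 2 * H * δ' - k * δ - (2 / (1 + δ)) * δ' ^ 2 - k * δ ^ 2) / (1 + δ) ^ 2 := by
  field_simp
  ring

/-- The nonlinear density-contrast equation for `δ` becomes the linear
equation `Δ̈ + 2H Δ̇ - 4π ρ_b Δ = 0` for `Δ = δ/(1+δ)`. -/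
theorem density_contrast_linearizes (I : Set ℝ) (hI : IsOpen I)
    (H ρb δ δ' δ'' Δ Δ' Δ'' : ℝ → ℝ)
    (hpos : ∀ t ∈ I, 0 < 1 + δ t)
    (hδ : ∀ t ∈ I, HasDerivAt δ (δ' t) t)
    (hδ' : ∀ t ∈ I, HasDerivAt δ' (δ'' t) t)
    (hode : ∀ t ∈ I, δ'' t + 2 * H t * δ' t - 4 * π * ρb t * δ t
      - (2 / (1 + δ t)) * (δ' t) ^ 2 - 4 * π * ρb t * (δ t) ^ 2 = 0)
    (hΔ : ∀ t, Δ t = δ t / (1 + δ t))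
    (hΔ' : ∀ t ∈ I, HasDerivAt Δ (Δ' t) t)
    (hΔ'' : ∀ t ∈ I, HasDerivAt Δ' (Δ'' t) t) :
    ∀ t ∈ I, Δ'' t + 2 * H t * Δ' t - 4 * π * ρb t * Δ t = 0 := by
  obtain rfl : Δ = fun s => δ s / (1 + δ s) := funext hΔ
  have hne : ∀ t ∈ I, 1 + δ t ≠ 0 := fun t ht => (hpos t ht).ne'
  have hΔ'_eq : ∀ t ∈ I, Δ' t = δ' t / (1 + δ t) ^ 2 := fun t ht =>
    (hΔ' t ht).unique ((hδ t ht).div_one_add_self (hne t ht))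
  intro t ht
  have hΔ''_eq : Δ'' t = δ'' t / (1 + δ t) ^ 2 - 2 * δ' t * δ' t / (1 + δ t) ^ 3 :=
    (hΔ'' t ht).unique <| ((hδ t ht).div_one_add_sq (hδ' t ht) (hne t ht)).congr_of_eventuallyEq
      (Filter.eventually_of_mem (hI.mem_nhds ht) hΔ'_eq)
  beta_reduce
  rw [hΔ''_eq, hΔ'_eq t ht, linear_residual_eq_div_sq _ _ _ _ _ (hne t ht), hode t ht, zero_div]
end

section
/- Let R : ℝ × [0, r_B] → ℝ be C², with R(t, 0) = 0, R > 0 for r > 0, and ∂_r R > 0. Define V(t) = 4π ∫₀^{r_B} R² ∂_r R dr, ⟨I⟩(t) = (4π/V)∫₀^{r_B} ∂_r(∂_t R · R²) dr, and ⟨II⟩(t) = (4π/V)∫₀^{r_B} ∂_r((∂_t R)² R) dr. Assume ∂_t R(t,0) = 0. Then V = (4π/3) R_B³, ⟨I⟩ = 3 (∂_t R)_B / R_B, ⟨II⟩ = 3 ((∂_t R)_B / R_B)², where subscript B denotes evaluation at r = r_B, and consequently the backreaction Q_B := 2⟨II⟩ − (2/3)⟨I⟩² = 0. -/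
open Real intervalIntegral

/-!
Both averaged invariants are integrals of radial derivatives, so they reduce to boundary terms
at `r_B`; the centre contributes nothing because `R = Ṙ = 0` there. Substituting `R` for `r`
gives `V = 4π ∫₀^{R_B} R² dR = (4π/3) R_B³`. With `H = Ṙ_B / R_B` this yields `⟨I⟩ = 3H` and
`⟨II⟩ = 3H²`, and `2 · 3H² - (2/3)(3H)² = 0`.
-/

theorem contDiff_partialDeriv_fst {E : Type*} [NormedAddCommGroup E] [NormedSpace ℝ E]
    {f ft : ℝ → ℝ → E} {n : WithTop ℕ∞}
    (hf : ContDiff ℝ (n + 1) (fun p : ℝ × ℝ => f p.1 p.2))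
    (hft : ∀ s r, HasDerivAt (fun u => f u r) (ft s r) s) :
    ContDiff ℝ n (fun p : ℝ × ℝ => ft p.1 p.2) := by
  set F : ℝ × ℝ → E := fun p => f p.1 p.2
  have hF : Differentiable ℝ F := hf.differentiable (by simp)
  have hft_eq : (fun p : ℝ × ℝ => ft p.1 p.2) = fun p => fderiv ℝ F p (1, 0) := by
    funext ⟨s, r⟩
    have hline : HasDerivAt (fun u : ℝ => (u, r)) ((1 : ℝ), (0 : ℝ)) s :=
      (hasDerivAt_id s).prodMk (hasDerivAt_const s r)
    have hcomp := (hF (s, r)).hasFDerivAt.comp_hasDerivAt s hline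
    exact (hft s r).unique hcomp
  rw [hft_eq]
  exact (hf.fderiv_right le_rfl).clm_apply contDiff_const

theorem integral_sq_mul_deriv_eq {f f' : ℝ → ℝ} {a b : ℝ}
    (hf : ∀ x ∈ Set.uIcc a b, HasDerivAt f (f' x) x) (hf' : ContinuousOn f' (Set.uIcc a b)) :
    ∫ x in a..b, f x ^ 2 * f' x = (f b ^ 3 - f a ^ 3) / 3 := by
  have hsubst := integral_comp_mul_deriv hf hf' (continuous_pow 2)
  simp only [Function.comp_def] at hsubst
  rw [hsubst, integral_pow]
  norm_num

-- At `R = 0` both sides are `0`, by the convention `x / 0 = 0`.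
theorem four_pi_div_ball_volume_mul_sq (x R : ℝ) :
    4 * π / (4 * π / 3 * R ^ 3) * (x * R ^ 2) = 3 * (x / R) := by
  rcases eq_or_ne R 0 with rfl | hR
  · simp
  · field_simp

theorem four_pi_div_ball_volume_sq_mul (x R : ℝ) :
    4 * π / (4 * π / 3 * R ^ 3) * (x ^ 2 * R) = 3 * (x / R) ^ 2 := by
  rcases eq_or_ne R 0 with rfl | hR
  · simp
  · field_simp

theorem parabolic_ltb_zero_backreaction_general (rB : ℝ)
    (R Rt Rr : ℝ → ℝ → ℝ) (t : ℝ)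
    (hC2 : ContDiff ℝ 2 (fun p : ℝ × ℝ => R p.1 p.2))
    (hRt : ∀ s r, HasDerivAt (fun u => R u r) (Rt s r) s)
    (hRr : ∀ s r, HasDerivAt (fun ρ => R s ρ) (Rr s r) r)
    (hR0 : R t 0 = 0)
    (hRt0 : Rt t 0 = 0)
    (V aI aII QB : ℝ)
    (hV : V = 4 * π * ∫ r in (0 : ℝ)..rB, (R t r) ^ 2 * Rr t r)
    (haI : aI = (4 * π / V) * ∫ r in (0 : ℝ)..rB, deriv (fun ρ => Rt t ρ * (R t ρ) ^ 2) r)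
    (haII : aII = (4 * π / V) * ∫ r in (0 : ℝ)..rB, deriv (fun ρ => (Rt t ρ) ^ 2 * R t ρ) r)
    (hQB : QB = 2 * aII - (2 / 3) * aI ^ 2) :
    V = (4 * π / 3) * (R t rB) ^ 3 ∧
    aI = 3 * (Rt t rB / R t rB) ∧
    aII = 3 * (Rt t rB / R t rB) ^ 2 ∧
    QB = 0 := by
  have hslice : ContDiff ℝ ⊤ (fun ρ : ℝ => (t, ρ)) := contDiff_const.prodMk contDiff_id
  have hR : ContDiff ℝ 2 (R t ·) := hC2.comp (hslice.of_le le_top)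
  have hRt' : ContDiff ℝ 1 (Rt t ·) :=
    (contDiff_partialDeriv_fst (n := 1) hC2 hRt).comp (hslice.of_le le_top)
  have hRr' : Rr t = deriv (R t ·) := funext fun r => (hRr t r).deriv.symm
  have hVol : V = 4 * π / 3 * R t rB ^ 3 := by
    rw [hV, integral_sq_mul_deriv_eq (fun r _ => hRr t r)
      (hRr' ▸ hR.continuous_deriv one_le_two).continuousOn, hR0]
    ring
  have hI : aI = 3 * (Rt t rB / R t rB) := by
    rw [haI, integral_deriv_of_contDiffOn_uIcc (hRt'.mul ((hR.of_le one_le_two).pow 2)).contDiffOn,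
      hRt0, zero_mul, sub_zero, hVol, four_pi_div_ball_volume_mul_sq]
  have hII : aII = 3 * (Rt t rB / R t rB) ^ 2 := by
    rw [haII, integral_deriv_of_contDiffOn_uIcc ((hRt'.pow 2).mul (hR.of_le one_le_two)).contDiffOn,
      hR0, mul_zero, sub_zero, hVol, four_pi_div_ball_volume_sq_mul]
  refine ⟨hVol, hI, hII, ?_⟩
  rw [hQB, hI, hII]
  ring

/-- Vanishing of kinematical backreaction for parabolic LTB models: the
averaged invariants reduce to boundary terms, `V = (4π/3) R_B³`,
`⟨I⟩ = 3 Ṙ_B/R_B`, `⟨II⟩ = 3 (Ṙ_B/R_B)²`, hence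
`Q_B = 2⟨II⟩ - (2/3)⟨I⟩² = 0`. -/
theorem parabolic_ltb_zero_backreaction (rB : ℝ) (hrB : 0 < rB)
    (R Rt Rr : ℝ → ℝ → ℝ) (t : ℝ)
    (hC2 : ContDiff ℝ 2 (fun p : ℝ × ℝ => R p.1 p.2))
    (hRt : ∀ s r, HasDerivAt (fun u => R u r) (Rt s r) s)
    (hRr : ∀ s r, HasDerivAt (fun ρ => R s ρ) (Rr s r) r)
    (hR0 : R t 0 = 0)
    (hRpos : ∀ r, 0 < r → r ≤ rB → 0 < R t r)
    (hRrpos : ∀ r, 0 ≤ r → r ≤ rB → 0 < Rr t r)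
    (hRt0 : Rt t 0 = 0)
    (V aI aII QB : ℝ)
    (hV : V = 4 * π * ∫ r in (0 : ℝ)..rB, (R t r) ^ 2 * Rr t r)
    (haI : aI = (4 * π / V) * ∫ r in (0 : ℝ)..rB, deriv (fun ρ => Rt t ρ * (R t ρ) ^ 2) r)
    (haII : aII = (4 * π / V) * ∫ r in (0 : ℝ)..rB, deriv (fun ρ => (Rt t ρ) ^ 2 * R t ρ) r)
    (hQB : QB = 2 * aII - (2 / 3) * aI ^ 2) :
    V = (4 * π / 3) * (R t rB) ^ 3 ∧
    aI = 3 * (Rt t rB / R t rB) ∧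
    aII = 3 * (Rt t rB / R t rB) ^ 2 ∧
    QB = 0 :=
  parabolic_ltb_zero_backreaction_general rB R Rt Rr t hC2 hRt hRr hR0 hRt0 V aI aII QB hV haI haII
    hQB
end
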